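/- Let μ = Σ_{k=1}^∞ 2^{-k} δ_k on ℕ and let γ̄ = (1/2) δ_{(1,1,1)} + (1/2) Σ_{k=1}^∞ 4^{-k} (δ_{(2k,2k,2k+1)} + δ_{(2k,2k+1,2k)} + δ_{(2k+1,2k,2k)}) on ℕ³. Then γ̄ is a probability measure on ℕ³ and each of its three marginals equals μ. -/

import Mathlib

open MeasureTheory
open scoped ENNReal

/-! Under each coordinate projection the three atoms of `γ̄` above `k` become two atoms at
`2k+2` and one at `2k+3`, so after the factor `1/2` they carry the masses `2^{-(2k+2)}` and
`2^{-(2k+3)}` that `μ` gives these points; the atom at `(1,1,1)` accounts for `μ{1} = 1/2`.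
Total mass `1` then follows because a pushforward preserves it. -/

/- ℕ here denotes positive integers: we index by `k : ℕ` and use `k+1` for the
positive integer k+1, so `2*k+2 = 2(k+1)` and `2*k+3 = 2(k+1)+1`. -/

noncomputable def muCex : Measure ℕ :=
  Measure.sum (fun k : ℕ => ((2 : ℝ≥0∞)⁻¹ ^ (k + 1)) • Measure.dirac (k + 1))

noncomputable def gammaBarCex : Measure (ℕ × ℕ × ℕ) :=
  (2 : ℝ≥0∞)⁻¹ • Measure.dirac (1, 1, 1) +
  (2 : ℝ≥0∞)⁻¹ • Measure.sum (fun k : ℕ => ((4 : ℝ≥0∞)⁻¹ ^ (k + 1)) •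
    (Measure.dirac (2*k+2, 2*k+2, 2*k+3) + Measure.dirac (2*k+2, 2*k+3, 2*k+2)
      + Measure.dirac (2*k+3, 2*k+2, 2*k+2)))

namespace MeasureTheory.Measure

variable {α : Type*} [MeasurableSpace α]

lemma smul_sum {ι : Type*} (c : ℝ≥0∞) (μ : ι → Measure α) :
    c • sum μ = sum fun i => c • μ i := by
  ext s hs
  simp only [smul_apply, sum_apply _ hs, smul_eq_mul, ENNReal.tsum_mul_left]

lemma sum_nat_eq_add_sum_succ (μ : ℕ → Measure α) :
    sum μ = μ 0 + sum fun n => μ (n + 1) := by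
  ext s hs
  simp only [add_apply, sum_apply _ hs]
  exact tsum_eq_zero_add' ENNReal.summable

lemma sum_nat_eq_sum_even_add_odd (μ : ℕ → Measure α) :
    sum μ = sum fun n => μ (2 * n) + μ (2 * n + 1) := by
  rw [← sum_add_sum]
  ext s hs
  simp only [add_apply, sum_apply _ hs]
  exact (tsum_even_add_odd ENNReal.summable ENNReal.summable).symm

end MeasureTheory.Measure

open Measure

lemma isProbabilityMeasure_muCex : IsProbabilityMeasure muCex := by
  constructor
  simp only [muCex, sum_apply _ MeasurableSet.univ, Measure.smul_apply, measure_univ, smul_eq_mul,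
    mul_one, ENNReal.tsum_geometric_add_one, ENNReal.one_sub_inv_two, inv_inv]
  exact ENNReal.inv_mul_cancel two_ne_zero ENNReal.ofNat_ne_top

lemma muCex_eq_dirac_add_sum_even_odd : muCex = (2 : ℝ≥0∞)⁻¹ • dirac 1 +
    sum fun k : ℕ => (2 : ℝ≥0∞)⁻¹ ^ (2 * k + 2) • dirac (2 * k + 2) +
      (2 : ℝ≥0∞)⁻¹ ^ (2 * k + 3) • dirac (2 * k + 3) := by
  rw [muCex, sum_nat_eq_add_sum_succ, sum_nat_eq_sum_even_add_odd, zero_add, pow_one]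

lemma inv_four_pow_eq (k : ℕ) : (4 : ℝ≥0∞)⁻¹ ^ (k + 1) = 2⁻¹ ^ (2 * k + 2) := by
  rw [show 2 * k + 2 = 2 * (k + 1) by ring, pow_mul, ← ENNReal.inv_pow (n := 2)]
  norm_num

lemma map_gammaBarCex (f : ℕ × ℕ × ℕ → ℕ) :
    gammaBarCex.map f = (2 : ℝ≥0∞)⁻¹ • dirac (f (1, 1, 1)) +
      (2 : ℝ≥0∞)⁻¹ • sum fun k : ℕ => (4 : ℝ≥0∞)⁻¹ ^ (k + 1) •
        (dirac (f (2*k+2, 2*k+2, 2*k+3)) + dirac (f (2*k+2, 2*k+3, 2*k+2))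
          + dirac (f (2*k+3, 2*k+2, 2*k+2))) := by
  have hf : Measurable f := measurable_of_countable f
  simp only [gammaBarCex, Measure.map_add _ _ hf, Measure.map_smul,
    Measure.map_sum hf.aemeasurable, Measure.map_dirac' hf]

lemma map_gammaBarCex_eq_muCex (f : ℕ × ℕ × ℕ → ℕ) (h₁ : f (1, 1, 1) = 1)
    (hk : ∀ k : ℕ, dirac (f (2*k+2, 2*k+2, 2*k+3)) + dirac (f (2*k+2, 2*k+3, 2*k+2))
      + dirac (f (2*k+3, 2*k+2, 2*k+2)) = dirac (2*k+2) + dirac (2*k+2) + dirac (2*k+3)) :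
    gammaBarCex.map f = muCex := by
  rw [map_gammaBarCex, muCex_eq_dirac_add_sum_even_odd, h₁, smul_sum]
  congr 2
  funext k
  rw [hk, smul_smul, inv_four_pow_eq, smul_add, smul_add, ← add_smul, ← add_mul,
    ENNReal.inv_two_add_inv_two, one_mul, ← pow_succ']

theorem stmt1 :
    IsProbabilityMeasure gammaBarCex ∧
    Measure.map (fun p : ℕ × ℕ × ℕ => p.1) gammaBarCex = muCex ∧
    Measure.map (fun p : ℕ × ℕ × ℕ => p.2.1) gammaBarCex = muCex ∧
    Measure.map (fun p : ℕ × ℕ × ℕ => p.2.2) gammaBarCex = muCex := by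
  have h₁ : gammaBarCex.map (fun p => p.1) = muCex :=
    map_gammaBarCex_eq_muCex _ rfl fun _ => rfl
  have h₂ : gammaBarCex.map (fun p => p.2.1) = muCex :=
    map_gammaBarCex_eq_muCex _ rfl fun _ => add_right_comm _ _ _
  have h₃ : gammaBarCex.map (fun p => p.2.2) = muCex :=
    map_gammaBarCex_eq_muCex _ rfl fun _ => by abel
  have : IsProbabilityMeasure (gammaBarCex.map fun p => p.1) :=
    h₁ ▸ isProbabilityMeasure_muCex
  exact ⟨isProbabilityMeasure_of_map fun p => p.1, h₁, h₂, h₃⟩
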